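/- Let X, Y be strings of length n with ED(X,Y) ≤ β for some β ≥ 1, and define, for each level p ∈ [1, ⌈log₂ n⌉], G_p = {i ∈ [0, m_p) : ED_β(X_{p,i}, Y_{p,i}) > ψ} for an integer ψ ≥ 0. Then Σ_{p=1}^{⌈log₂ n⌉} |G_p| ≤ 2β⌈log₂ n⌉/(ψ+1). -/

import Mathlib

/-- A cost function for the Levenshtein distance (removed from Mathlib; restated with its
old meaning). -/
structure Levenshtein.Cost (α β δ : Type*) where
  delete : α → δ
  insert : β → δ
  substitute : α → β → δ

/-- The default unit cost function (old Mathlib `Levenshtein.defaultCost`). -/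
def Levenshtein.defaultCost {α : Type*} [DecidableEq α] : Levenshtein.Cost α α ℕ where
  delete _ := 1
  insert _ := 1
  substitute a b := if a = b then 0 else 1

/-- The Levenshtein distance (old Mathlib `levenshtein`), via its defining recursion. -/
def levenshtein {α β δ : Type*} [AddZeroClass δ] [Min δ] (C : Levenshtein.Cost α β δ) :
    List α → List β → δ
  | [], [] => 0
  | [], y :: ys => C.insert y + levenshtein C [] ys
  | x :: xs, [] => C.delete x + levenshtein C xs []
  | x :: xs, y :: ys =>
    min (C.delete x + levenshtein C xs (y :: ys))
      (min (C.insert y + levenshtein C (x :: xs) ys) (C.substitute x y + levenshtein C xs ys))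

/-- The edit distance between two lists (Levenshtein distance with unit costs). -/
def ED {α : Type*} [DecidableEq α] (X Y : List α) : ℕ :=
  levenshtein Levenshtein.defaultCost X Y

/-- The β-shifted edit distance: the minimum over shifts Δ ∈ [0, min(|U|,|V|,β)] of
the edit distance after removing Δ characters from one end of each string. -/
def EDs {α : Type*} [DecidableEq α] (β : ℕ) (U V : List α) : ℕ :=
  (Finset.range (min (min U.length V.length) β + 1)).inf' Finset.nonempty_range_add_one
    fun Δ => min (ED (U.drop Δ) (V.take (V.length - Δ)))
                 (ED (U.take (U.length - Δ)) (V.drop Δ))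

/-- The i-th block of length 2^p of a string: X[i·2^p .. min(n,(i+1)·2^p)). -/
def blk {α : Type*} (X : List α) (p i : ℕ) : List α := (X.drop (i * 2 ^ p)).take (2 ^ p)

/-- The number of blocks at level p: m_p = ⌈n / 2^p⌉. -/
def nblocks (n p : ℕ) : ℕ := (n + 2 ^ p - 1) / 2 ^ p

/-- The set G_p of indices of block pairs with β-shifted edit distance exceeding ψ. -/
def Gset {α : Type*} [DecidableEq α] (X Y : List α) (n β ψ p : ℕ) : Finset ℕ :=
  (Finset.range (nblocks n p)).filter fun i => ψ < EDs β (blk X p i) (blk Y p i)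

/-!
An optimal alignment of `X` with `Y` cuts `Y` into consecutive pieces `A_i` matched with the
level-`p` blocks `X_{p,i}`, with `∑ ED(X_{p,i}, A_i) ≤ ED(X, Y) ≤ β`. The piece `A_i` starts at
most `β` positions away from the block, so shifting by that offset and cutting the alignment of
`X_{p,i}` with `A_i` once more gives `ED_β(X_{p,i}, Y_{p,i}) ≤ 2 ED(X_{p,i}, A_i)`: the second
copy of `ED(X_{p,i}, A_i)` pays for the mismatch between the lengths of `A_i` and `Y_{p,i}`.
So every level has `∑_i ED_β(X_{p,i}, Y_{p,i}) ≤ 2β`, and at most `2β/(ψ+1)` of its terms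
exceed `ψ`.
-/

open Finset

namespace List

variable {α : Type*} (Y : List α)

lemma extract_append_extract {x y z : ℕ} (hxy : x ≤ y) (hyz : y ≤ z) :
    Y.extract x y ++ Y.extract y z = Y.extract x z := by
  simp only [extract_eq_take_drop]
  rw [show z - x = (y - x) + (z - y) by omega, take_add, drop_drop,
    show x + (y - x) = y by omega]

lemma length_extract_of_le {x y : ℕ} (h : y ≤ Y.length) : (Y.extract x y).length = y - x := by
  simp only [extract_eq_take_drop, length_take, length_drop]
  omega

lemma drop_extract (x y d : ℕ) : (Y.extract x y).drop d = Y.extract (x + d) y := by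
  simp only [extract_eq_take_drop, drop_take, drop_drop]
  congr 1
  omega

lemma take_extract {x y k : ℕ} (h : k ≤ y - x) :
    (Y.extract x y).take k = Y.extract x (x + k) := by
  simp only [extract_eq_take_drop, take_take]
  congr 1
  omega

end List

lemma blk_eq_extract {α : Type*} (X : List α) (p i : ℕ) :
    blk X p i = X.extract (min (i * 2 ^ p) X.length) (min ((i + 1) * 2 ^ p) X.length) := by
  rw [blk, List.extract_eq_take_drop, add_mul, one_mul]
  generalize 2 ^ p = k
  rcases le_or_gt (i * k) X.length with h | h
  · rw [min_eq_left h, List.take_eq_take_iff, List.length_drop]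
    omega
  · rw [min_eq_right h.le, List.drop_length, List.take_nil, List.drop_eq_nil_of_le h.le,
      List.take_nil]

section EditDistance

variable {α : Type*} [DecidableEq α]

@[simp] lemma ED_nil_left (B : List α) : ED [] B = B.length := by
  induction B with
  | nil => simp [ED, levenshtein]
  | cons b B ih =>
    unfold ED at ih ⊢
    rw [levenshtein, ih]
    exact Nat.add_comm _ _

@[simp] lemma ED_nil_right (A : List α) : ED A [] = A.length := by
  induction A with
  | nil => simp [ED, levenshtein]
  | cons a A ih =>
    unfold ED at ih ⊢
    rw [levenshtein, ih]
    exact Nat.add_comm _ _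

lemma ED_cons_cons (a b : α) (A B : List α) :
    ED (a :: A) (b :: B) =
      min (ED A (b :: B) + 1) (min (ED (a :: A) B + 1) (ED A B + if a = b then 0 else 1)) := by
  simp only [ED, levenshtein, Levenshtein.defaultCost]
  omega

lemma ED_comm : ∀ A B : List α, ED A B = ED B A
  | [], B => by simp
  | a :: A, [] => by simp
  | a :: A, b :: B => by
    rw [ED_cons_cons, ED_cons_cons, ED_comm A, ED_comm (a :: A) B, ED_comm A B]
    simp only [eq_comm (a := a)]
    omega

lemma ED_cons_left_le (a : α) (A B : List α) : ED (a :: A) B ≤ ED A B + 1 := by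
  cases B with
  | nil => simp
  | cons b B => rw [ED_cons_cons]; omega

lemma ED_cons_right_le (b : α) (A B : List α) : ED A (b :: B) ≤ ED A B + 1 := by
  rw [ED_comm, ED_comm A]
  exact ED_cons_left_le b B A

lemma length_le_ED_add_length : ∀ A B : List α, A.length ≤ ED A B + B.length
  | [], B => by simp
  | a :: A, [] => by simp
  | a :: A, b :: B => by
    have := length_le_ED_add_length A (b :: B)
    have := length_le_ED_add_length (a :: A) B
    have := length_le_ED_add_length A B
    simp only [List.length_cons] at *
    rw [ED_cons_cons]
    omega

lemma ED_append_append_le : ∀ A A' B B' : List α,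
    ED (A ++ A') (B ++ B') ≤ ED A B + ED A' B'
  | [], A', [], B' => by simp
  | [], A', b :: B, B' => by
    have := ED_append_append_le [] A' B B'
    have := ED_cons_right_le b A' (B ++ B')
    simp only [List.nil_append, List.cons_append, ED_nil_left, List.length_cons] at *
    omega
  | a :: A, A', [], B' => by
    have := ED_append_append_le A A' [] B'
    have := ED_cons_left_le a (A ++ A') B'
    simp only [List.nil_append, List.cons_append, ED_nil_right, List.length_cons] at *
    omega
  | a :: A, A', b :: B, B' => by
    have := ED_append_append_le A A' (b :: B) B'
    have := ED_append_append_le (a :: A) A' B B'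
    have := ED_append_append_le A A' B B'
    have := ED_cons_left_le a (A ++ A') (b :: (B ++ B'))
    have := ED_cons_right_le b (a :: (A ++ A')) (B ++ B')
    have := ED_cons_cons a b (A ++ A') (B ++ B')
    simp only [List.cons_append] at *
    rw [ED_cons_cons a b A B]
    omega

lemma exists_ED_take_add_ED_drop_le : ∀ (A B : List α) (s : ℕ),
    ∃ j ≤ B.length, ED (A.take s) (B.take j) + ED (A.drop s) (B.drop j) ≤ ED A B
  | [], B, s => ⟨0, by simp⟩
  | a :: A, B, 0 => ⟨0, by simp⟩
  | a :: A, [], s + 1 => ⟨0, le_rfl, by simp; omega⟩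
  | a :: A, b :: B, s + 1 => by
    obtain h | h | h : ED (a :: A) (b :: B) = ED A (b :: B) + 1 ∨
        ED (a :: A) (b :: B) = ED (a :: A) B + 1 ∨
        ED (a :: A) (b :: B) = ED A B + (if a = b then 0 else 1) := by
      rw [ED_cons_cons]; omega
    · obtain ⟨j, hj, hsplit⟩ := exists_ED_take_add_ED_drop_le A (b :: B) s
      have := ED_cons_left_le a (A.take s) ((b :: B).take j)
      exact ⟨j, hj, by simp only [List.take_succ_cons, List.drop_succ_cons]; omega⟩
    · obtain ⟨j, hj, hsplit⟩ := exists_ED_take_add_ED_drop_le (a :: A) B (s + 1)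
      have := ED_cons_right_le b ((a :: A).take (s + 1)) (B.take j)
      refine ⟨j + 1, by simpa using hj, ?_⟩
      simp only [List.take_succ_cons, List.drop_succ_cons] at *
      omega
    · obtain ⟨j, hj, hsplit⟩ := exists_ED_take_add_ED_drop_le A B s
      have := ED_cons_cons a b (A.take s) (B.take j)
      refine ⟨j + 1, by simpa using hj, ?_⟩
      simp only [List.take_succ_cons, List.drop_succ_cons]
      omega

lemma exists_ED_take_add_ED_drop_le' (A B : List α) (j : ℕ) :
    ∃ s, ED (A.take s) (B.take j) + ED (A.drop s) (B.drop j) ≤ ED A B := by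
  obtain ⟨s, -, h⟩ := exists_ED_take_add_ED_drop_le B A j
  exact ⟨s, by rwa [ED_comm, ED_comm (A.drop s), ED_comm A]⟩

lemma ED_append_right_le (A B C : List α) : ED A (B ++ C) ≤ ED A B + C.length := by
  simpa using ED_append_append_le A [] B C

lemma ED_append_left_le (A B C : List α) : ED A (C ++ B) ≤ ED A B + C.length := by
  simpa [add_comm] using ED_append_append_le [] A C B

lemma ED_le_ED_append_right (A B C : List α) : ED A B ≤ ED A (B ++ C) + C.length := by
  obtain ⟨s, h⟩ := exists_ED_take_add_ED_drop_le' A (B ++ C) B.length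
  have hrest := length_le_ED_add_length (A.drop s) C
  have hcut := ED_append_append_le (A.take s) (A.drop s) B []
  simp only [List.take_left', List.drop_left', List.take_append_drop, List.append_nil,
    ED_nil_right] at h hcut
  omega

lemma ED_le_ED_append_left (A B C : List α) : ED A B ≤ ED A (C ++ B) + C.length := by
  obtain ⟨s, h⟩ := exists_ED_take_add_ED_drop_le' A (C ++ B) C.length
  have hrest := length_le_ED_add_length (A.take s) C
  have hcut := ED_append_append_le (A.take s) (A.drop s) [] B
  simp only [List.take_left', List.drop_left', List.take_append_drop, List.nil_append,
    ED_nil_right] at h hcut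
  omega

lemma ED_extract_le_of_left_eq (Z Y : List α) {x y y' : ℕ} (hy : x ≤ y) (hy' : x ≤ y') :
    ED Z (Y.extract x y) ≤ ED Z (Y.extract x y') + (y - y' + (y' - y)) := by
  rcases le_total y y' with h | h
  · have := ED_le_ED_append_right Z (Y.extract x y) (Y.extract y y')
    have : (Y.extract y y').length ≤ y' - y := by simp
    rw [Y.extract_append_extract hy h] at *
    omega
  · have := ED_append_right_le Z (Y.extract x y') (Y.extract y' y)
    have : (Y.extract y' y).length ≤ y - y' := by simp
    rw [Y.extract_append_extract hy' h] at *
    omega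

lemma ED_extract_le_of_right_eq (Z Y : List α) {x x' y : ℕ} (hx : x ≤ y) (hx' : x' ≤ y) :
    ED Z (Y.extract x y) ≤ ED Z (Y.extract x' y) + (x - x' + (x' - x)) := by
  rcases le_total x x' with h | h
  · have := ED_append_left_le Z (Y.extract x' y) (Y.extract x x')
    have : (Y.extract x x').length ≤ x' - x := by simp
    rw [Y.extract_append_extract h hx'] at *
    omega
  · have := ED_le_ED_append_left Z (Y.extract x y) (Y.extract x' x)
    have : (Y.extract x' x).length ≤ x - x' := by simp
    rw [Y.extract_append_extract h hx] at *
    omega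

lemma ED_extract_le (Z Y : List α) {x y x' y' : ℕ} (hxy : x ≤ y) (hxy' : x' ≤ y') :
    ED Z (Y.extract x y) ≤
      ED Z (Y.extract x' y') + (x - x' + (x' - x)) + (y - y' + (y' - y)) := by
  rcases le_total x y' with h | h
  · have := ED_extract_le_of_left_eq Z Y hxy h
    have := ED_extract_le_of_right_eq Z Y h hxy'
    omega
  · have := ED_extract_le_of_right_eq Z Y hxy (hxy'.trans (h.trans hxy))
    have := ED_extract_le_of_left_eq Z Y (hxy'.trans (h.trans hxy)) hxy'
    omega

lemma EDs_le_ED_drop_take {β Δ : ℕ} {U V : List α} (hU : Δ ≤ U.length) (hV : Δ ≤ V.length)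
    (hβ : Δ ≤ β) : EDs β U V ≤ ED (U.drop Δ) (V.take (V.length - Δ)) :=
  (inf'_le _ (by simp only [mem_range]; omega)).trans (min_le_left _ _)

lemma EDs_le_ED_take_drop {β Δ : ℕ} {U V : List α} (hU : Δ ≤ U.length) (hV : Δ ≤ V.length)
    (hβ : Δ ≤ β) : EDs β U V ≤ ED (U.take (U.length - Δ)) (V.drop Δ) :=
  (inf'_le _ (by simp only [mem_range]; omega)).trans (min_le_right _ _)

lemma EDs_extract_le (U Y : List α) {β a a' b b' : ℕ} (hU : U.length = b' - b) (haa' : a ≤ a')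
    (hb' : b' ≤ Y.length) (ha' : a' ≤ Y.length) (hab : a ≤ b + β) (hba : b ≤ a + β) :
    EDs β U (Y.extract b b') ≤ 2 * ED U (Y.extract a a') := by
  have hA := Y.length_extract_of_le (x := a) ha'
  have hV := Y.length_extract_of_le (x := b) hb'
  have hUA := length_le_ED_add_length U (Y.extract a a')
  have hAU := length_le_ED_add_length (Y.extract a a') U
  rw [ED_comm _ U] at hAU
  -- shift by `|a - b|`; a shift by the whole block leaves two empty strings
  rcases le_or_gt b a with hle | hlt
  · rcases le_or_gt (b' - b) (a - b) with hL | hL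
    · have := EDs_le_ED_take_drop (β := β) (U := U) (V := Y.extract b b') (Δ := b' - b)
        (by omega) (by omega) (by omega)
      rw [hU, Nat.sub_self, List.take_zero, ← hV, List.drop_length, ED_nil_left,
        List.length_nil] at this
      omega
    · have h0 := EDs_le_ED_take_drop (β := β) (U := U) (V := Y.extract b b') (Δ := a - b)
        (by omega) (by omega) (by omega)
      rw [hU, List.drop_extract, show b' - b - (a - b) = b' - a by omega,
        show b + (a - b) = a by omega] at h0
      obtain ⟨j, hj, hsplit⟩ := exists_ED_take_add_ED_drop_le U (Y.extract a a') (b' - a)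
      rw [Y.take_extract (by omega), Y.drop_extract] at hsplit
      have hadj := ED_extract_le_of_left_eq (U.take (b' - a)) Y (x := a) (y := b') (y' := a + j)
        (by omega) (by omega)
      have hrest := length_le_ED_add_length (U.drop (b' - a)) (Y.extract (a + j) a')
      have hrest' := length_le_ED_add_length (Y.extract (a + j) a') (U.drop (b' - a))
      rw [ED_comm _ (U.drop _)] at hrest'
      rw [List.length_drop, Y.length_extract_of_le ha', hU] at hrest hrest'
      omega
  · rcases le_or_gt (b' - b) (b - a) with hL | hL
    · have := EDs_le_ED_drop_take (β := β) (U := U) (V := Y.extract b b') (Δ := b' - b)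
        (by omega) (by omega) (by omega)
      rw [hV, Nat.sub_self, List.take_zero, ← hU, List.drop_length, ED_nil_left,
        List.length_nil] at this
      omega
    · have h0 := EDs_le_ED_drop_take (β := β) (U := U) (V := Y.extract b b') (Δ := b - a)
        (by omega) (by omega) (by omega)
      rw [hV, Y.take_extract (by omega)] at h0
      obtain ⟨j, hj, hsplit⟩ := exists_ED_take_add_ED_drop_le U (Y.extract a a') (b - a)
      rw [Y.take_extract (by omega), Y.drop_extract] at hsplit
      have hadj := ED_extract_le (U.drop (b - a)) Y (x := b) (y := b + (b' - b - (b - a)))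
        (x' := a + j) (y' := a') (by omega) (by omega)
      have hhead := length_le_ED_add_length (U.take (b - a)) (Y.extract a (a + j))
      have hhead' := length_le_ED_add_length (Y.extract a (a + j)) (U.take (b - a))
      rw [ED_comm _ (U.take _)] at hhead'
      rw [Y.length_extract_of_le (by omega), List.length_take, hU] at hhead hhead'
      omega

/-- The invariant `hbudget`: the alignment's current position `a` in `Y` is off from the block
boundary `b 0` by at most what the budget `β` leaves after paying for the rest of the
alignment. -/
lemma sum_EDs_extract_le (X Y : List α) (β r : ℕ) (b : ℕ → ℕ) (hb : Monotone b)
    (hbX : ∀ l, b l ≤ X.length) (hbY : ∀ l, b l ≤ Y.length) (a : ℕ) (ha : a ≤ Y.length)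
    (hbudget : a - b 0 + (b 0 - a) + ED (X.drop (b 0)) (Y.drop a) ≤ β) :
    ∑ l ∈ range r, EDs β (X.extract (b l) (b (l + 1))) (Y.extract (b l) (b (l + 1))) ≤
      2 * ED (X.drop (b 0)) (Y.drop a) := by
  induction r generalizing b a with
  | zero => simp
  | succ r ih =>
    have hb01 : b 0 ≤ b 1 := hb (Nat.zero_le 1)
    obtain ⟨j, hj, hsplit⟩ : ∃ j ≤ Y.length - a,
        ED (X.extract (b 0) (b 1)) (Y.extract a (a + j)) +
          ED (X.drop (b 1)) (Y.drop (a + j)) ≤ ED (X.drop (b 0)) (Y.drop a) := by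
      obtain ⟨j, hj, h⟩ :=
        exists_ED_take_add_ED_drop_le (X.drop (b 0)) (Y.drop a) (b 1 - b 0)
      refine ⟨j, by simpa using hj, ?_⟩
      rw [List.drop_drop, List.drop_drop, Nat.add_sub_cancel' hb01] at h
      simpa using h
    have hfirst := EDs_extract_le (X.extract (b 0) (b 1)) Y (β := β) (a := a) (a' := a + j)
      (b := b 0) (b' := b 1) (X.length_extract_of_le (hbX 1)) (by omega) (hbY 1)
      (by omega) (by omega) (by omega)
    have hlen := length_le_ED_add_length (X.extract (b 0) (b 1)) (Y.extract a (a + j))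
    have hlen' := length_le_ED_add_length (Y.extract a (a + j)) (X.extract (b 0) (b 1))
    rw [ED_comm _ (X.extract _ _)] at hlen'
    rw [X.length_extract_of_le (hbX 1), Y.length_extract_of_le (by omega)] at hlen hlen'
    have hrest : ∑ l ∈ range r, EDs β (X.extract (b (l + 1)) (b (l + 1 + 1)))
        (Y.extract (b (l + 1)) (b (l + 1 + 1))) ≤ 2 * ED (X.drop (b 1)) (Y.drop (a + j)) :=
      ih (fun l => b (l + 1)) (fun l l' h => hb (by omega)) (fun l => hbX _) (fun l => hbY _)
        (a + j) (by omega) (by simp only [zero_add]; omega)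
    rw [sum_range_succ', zero_add]
    omega

lemma sum_EDs_blk_le (X Y : List α) (hXY : X.length = Y.length) (β p m : ℕ)
    (hED : ED X Y ≤ β) :
    ∑ i ∈ range m, EDs β (blk X p i) (blk Y p i) ≤ 2 * ED X Y := by
  simp only [blk_eq_extract, ← hXY]
  have := sum_EDs_extract_le X Y β m (fun l => min (l * 2 ^ p) X.length)
    (fun l l' h => min_le_min_right _ (Nat.mul_le_mul_right _ h)) (fun l => min_le_right _ _)
    (fun l => hXY ▸ min_le_right _ _) 0 (Nat.zero_le _) (by simpa using hED)
  simpa using this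

end EditDistance

lemma mul_card_filter_lt_le_sum {ι : Type*} (s : Finset ι) (f : ι → ℕ) (ψ : ℕ) :
    (ψ + 1) * #{i ∈ s | ψ < f i} ≤ ∑ i ∈ s, f i :=
  calc (ψ + 1) * #{i ∈ s | ψ < f i}
      = ∑ i ∈ s with ψ < f i, (ψ + 1) := by rw [sum_const, smul_eq_mul, mul_comm]
    _ ≤ ∑ i ∈ s with ψ < f i, f i := sum_le_sum fun i hi => (mem_filter.1 hi).2
    _ ≤ ∑ i ∈ s, f i := sum_le_sum_of_subset (filter_subset _ _)

theorem stmt_6_general {α : Type*} [DecidableEq α] (n β ψ : ℕ) (X Y : List α)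
    (hX : X.length = n) (hY : Y.length = n) (hED : ED X Y ≤ β) :
    (ψ + 1) * ∑ p ∈ Finset.Icc 1 (Nat.clog 2 n), (Gset X Y n β ψ p).card ≤
      2 * β * Nat.clog 2 n := by
  have hlevel (p : ℕ) : (ψ + 1) * (Gset X Y n β ψ p).card ≤ 2 * β :=
    calc (ψ + 1) * (Gset X Y n β ψ p).card
        ≤ ∑ i ∈ range (nblocks n p), EDs β (blk X p i) (blk Y p i) :=
          mul_card_filter_lt_le_sum _ _ ψ
      _ ≤ 2 * ED X Y := sum_EDs_blk_le X Y (hX.trans hY.symm) β p _ hED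
      _ ≤ 2 * β := Nat.mul_le_mul_left 2 hED
  calc (ψ + 1) * ∑ p ∈ Icc 1 (Nat.clog 2 n), (Gset X Y n β ψ p).card
      = ∑ p ∈ Icc 1 (Nat.clog 2 n), (ψ + 1) * (Gset X Y n β ψ p).card := mul_sum _ _ _
    _ ≤ ∑ p ∈ Icc 1 (Nat.clog 2 n), 2 * β := sum_le_sum fun p _ => hlevel p
    _ = 2 * β * Nat.clog 2 n := by simp [mul_comm]

/-- Claim: if ED(X,Y) ≤ β then Σ_{p=1}^{⌈log₂ n⌉} |G_p| ≤ 2β⌈log₂ n⌉/(ψ+1),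
stated multiplicatively. -/
theorem stmt_6 {α : Type*} [DecidableEq α] (n β ψ : ℕ) (X Y : List α)
    (hX : X.length = n) (hY : Y.length = n) (hβ : 1 ≤ β) (hED : ED X Y ≤ β) :
    (ψ + 1) * ∑ p ∈ Finset.Icc 1 (Nat.clog 2 n), (Gset X Y n β ψ p).card ≤
      2 * β * Nat.clog 2 n :=
  stmt_6_general n β ψ X Y hX hY hED
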